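/- Let f : ℕ≥1 → ℕ≥1 assign to each n its largest square-free divisor d of n satisfying gcd(d, n/d) = 1. Then for all X ≥ 2, ∑_{n ≤ X} f(n)^{-1/2} ≪ X^{1/2} log X, with an absolute implied constant. -/

import Mathlib

/-!
Write `n = m * d` with `d = squarefreeUnitaryPart n` and `m = n / d`. No prime divides `m` exactly
once, so `m` is powerful, and `n ↦ (m, d)` is injective. Hence for `N = ⌊X⌋` the sum is at most
`∑_{m ≤ N powerful} ∑_{d ≤ N/m} d^{-1/2} ≤ 2 √N ∑_{m ≤ N powerful} m^{-1/2}`. Every powerful `m`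
has the form `a³c²`, so the last sum is at most `(∑_a a^{-3/2}) (∑_{c ≤ N} 1/c) ≪ log N`.
-/

open Finset

/-- `squarefreeUnitaryPart n` is the largest square-free divisor `d` of `n` with
`gcd(d, n/d) = 1`, i.e. the product of the primes dividing `n` exactly once. -/
noncomputable def squarefreeUnitaryPart (n : ℕ) : ℕ :=
  ∏ p ∈ n.primeFactors.filter (fun p => n.factorization p = 1), p

/-- For `m ≠ 0` this is the usual `p ∣ m → p ^ 2 ∣ m`; with this definition `0` is powerful. -/
def Nat.Powerful (m : ℕ) : Prop := ∀ p, m.factorization p ≠ 1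

theorem factorization_squarefreeUnitaryPart (n p : ℕ) :
    (squarefreeUnitaryPart n).factorization p = if n.factorization p = 1 then 1 else 0 := by
  have hprime : ∀ q ∈ n.primeFactors.filter (fun q => n.factorization q = 1), q.Prime :=
    fun q hq => Nat.prime_of_mem_primeFactors (mem_filter.mp hq).1
  rw [squarefreeUnitaryPart, Nat.factorization_prod fun q hq => (hprime q hq).ne_zero,
    Finsupp.finsetSum_apply, sum_congr rfl fun q hq => by rw [(hprime q hq).factorization]]
  simp only [Finsupp.single_apply, sum_ite_eq', mem_filter, ← Nat.support_factorization,
    Finsupp.mem_support_iff]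
  grind

theorem squarefreeUnitaryPart_dvd (n : ℕ) : squarefreeUnitaryPart n ∣ n :=
  (prod_dvd_prod_of_subset _ _ _ (filter_subset _ _)).trans (Nat.prod_primeFactors_dvd n)

theorem Nat.powerful_div_squarefreeUnitaryPart (n : ℕ) :
    (n / squarefreeUnitaryPart n).Powerful := by
  intro p
  rw [Nat.factorization_div (squarefreeUnitaryPart_dvd n), Finsupp.tsub_apply,
    factorization_squarefreeUnitaryPart]
  split_ifs <;> omega

/-- Writing `m = b² a` with `a` squarefree, powerfulness forces `a ∣ b`. -/
theorem Nat.Powerful.exists_eq_cube_mul_sq {m : ℕ} (hm : m.Powerful) :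
    ∃ a c, a ^ 3 * c ^ 2 = m := by
  obtain ⟨a, b, rfl, ha⟩ := Nat.sq_mul_squarefree m
  suffices a ∣ b by obtain ⟨c, rfl⟩ := this; exact ⟨a, c, by ring⟩
  rcases eq_or_ne b 0 with rfl | hb
  · exact dvd_zero a
  rw [← Nat.factorization_le_iff_dvd ha.ne_zero hb]
  intro p
  have h_le_one := (Nat.squarefree_iff_factorization_le_one ha.ne_zero).mp ha p
  have h_ne_one := hm p
  rw [Nat.factorization_mul (pow_ne_zero 2 hb) ha.ne_zero, Nat.factorization_pow] at h_ne_one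
  simp only [Finsupp.add_apply, Finsupp.smul_apply, smul_eq_mul] at h_ne_one
  omega

theorem natCast_cube_mul_sq_rpow_neg_half (a c : ℕ) :
    ((a ^ 3 * c ^ 2 : ℕ) : ℝ) ^ (-(1 / 2 : ℝ)) = (a : ℝ) ^ (-(3 / 2 : ℝ)) * (c : ℝ)⁻¹ := by
  push_cast
  rw [Real.mul_rpow (by positivity) (by positivity), ← Real.rpow_natCast, ← Real.rpow_natCast,
    ← Real.rpow_mul (by positivity), ← Real.rpow_mul (by positivity)]
  norm_num [Real.rpow_neg_one]

theorem Finset.sum_comp_le_sum_of_injOn {ι κ M : Type*} [AddCommMonoid M] [PartialOrder M]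
    [IsOrderedAddMonoid M] {s : Finset ι} {t : Finset κ} {e : ι → κ} (he : Set.InjOn e s)
    (hest : Set.MapsTo e s t) {g : κ → M} (hg : ∀ j ∈ t, 0 ≤ g j) :
    ∑ i ∈ s, g (e i) ≤ ∑ j ∈ t, g j := by
  classical
  rw [← sum_image he]
  exact sum_le_sum_of_subset_of_nonneg (image_subset_iff.2 hest) fun j hj _ => hg j hj

theorem sum_Icc_inv_sqrt_le (K : ℕ) : ∑ k ∈ Icc 1 K, (√(k : ℝ))⁻¹ ≤ 2 * √K := by
  induction K with
  | zero => simp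
  | succ K ih =>
    -- `2 s (s - t) ≥ (s + t) (s - t) = s² - t² = 1`
    have step : (√((K + 1 : ℕ) : ℝ))⁻¹ ≤ 2 * √((K + 1 : ℕ) : ℝ) - 2 * √(K : ℝ) := by
      set s := √((K + 1 : ℕ) : ℝ)
      set t := √(K : ℝ)
      have hs_sq : s ^ 2 = t ^ 2 + 1 := by
        simp only [s, t, Real.sq_sqrt (Nat.cast_nonneg _)]; push_cast; ring
      have ht : 0 ≤ t := Real.sqrt_nonneg _
      have hs : 0 < s := by nlinarith [Real.sqrt_nonneg ((K + 1 : ℕ) : ℝ)]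
      rw [inv_le_iff_one_le_mul₀ hs]
      nlinarith
    rw [sum_Icc_succ_top (by omega)]
    linarith

theorem sum_Icc_div_rpow_neg_half_le (N m : ℕ) :
    ∑ d ∈ Icc 1 (N / m), (d : ℝ) ^ (-(1 / 2 : ℝ)) ≤ 2 * √N * (m : ℝ) ^ (-(1 / 2 : ℝ)) := by
  have h_inv_sqrt (x : ℕ) : (x : ℝ) ^ (-(1 / 2 : ℝ)) = (√x)⁻¹ := by
    rw [Real.rpow_neg (Nat.cast_nonneg x), Real.sqrt_eq_rpow]
  simp only [h_inv_sqrt]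
  calc ∑ d ∈ Icc 1 (N / m), (√(d : ℝ))⁻¹ ≤ 2 * √((N / m : ℕ) : ℝ) := sum_Icc_inv_sqrt_le _
    _ ≤ 2 * √((N : ℝ) / m) := by gcongr; exact Nat.cast_div_le
    _ = 2 * √N * (√m)⁻¹ := by
        rw [Real.sqrt_div' _ (Nat.cast_nonneg m), div_eq_mul_inv, mul_assoc]

open scoped Classical in
theorem sum_powerful_rpow_neg_half_le (N : ℕ) :
    ∑ m ∈ Icc 1 N with m.Powerful, (m : ℝ) ^ (-(1 / 2 : ℝ))
      ≤ (∑' a : ℕ, (a : ℝ) ^ (-(3 / 2 : ℝ))) * (1 + Real.log N) := by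
  have h_subset : {m ∈ Icc 1 N | m.Powerful} ⊆
      (Icc 1 N ×ˢ Icc 1 N).image fun x : ℕ × ℕ => x.1 ^ 3 * x.2 ^ 2 := by
    intro m hm
    obtain ⟨hmN, hm⟩ := mem_filter.mp hm
    obtain ⟨a, c, rfl⟩ := hm.exists_eq_cube_mul_sq
    have ha : a ≠ 0 := by rintro rfl; simp at hmN
    have hc : c ≠ 0 := by rintro rfl; simp at hmN
    refine mem_image.mpr ⟨(a, c), ?_, rfl⟩
    simp only [mem_product, mem_Icc] at hmN ⊢
    refine ⟨⟨by omega, ?_⟩, by omega, ?_⟩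
    · calc a ≤ a ^ 3 := Nat.le_self_pow (by norm_num) a
        _ ≤ a ^ 3 * c ^ 2 := Nat.le_mul_of_pos_right _ (by positivity)
        _ ≤ N := hmN.2
    · calc c ≤ c ^ 2 := Nat.le_self_pow (by norm_num) c
        _ ≤ a ^ 3 * c ^ 2 := Nat.le_mul_of_pos_left _ (by positivity)
        _ ≤ N := hmN.2
  have h_summable : Summable fun a : ℕ => (a : ℝ) ^ (-(3 / 2 : ℝ)) :=
    Real.summable_nat_rpow.mpr (by norm_num)
  have h_harmonic : ∑ c ∈ Icc 1 N, (c : ℝ)⁻¹ ≤ 1 + Real.log N := by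
    simpa [harmonic_eq_sum_Icc] using harmonic_le_one_add_log N
  calc ∑ m ∈ Icc 1 N with m.Powerful, (m : ℝ) ^ (-(1 / 2 : ℝ))
      ≤ ∑ m ∈ (Icc 1 N ×ˢ Icc 1 N).image (fun x : ℕ × ℕ => x.1 ^ 3 * x.2 ^ 2),
          (m : ℝ) ^ (-(1 / 2 : ℝ)) :=
        sum_le_sum_of_subset_of_nonneg h_subset fun _ _ _ => by positivity
    _ ≤ ∑ x ∈ Icc 1 N ×ˢ Icc 1 N, ((x.1 ^ 3 * x.2 ^ 2 : ℕ) : ℝ) ^ (-(1 / 2 : ℝ)) :=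
        sum_image_le_of_nonneg fun _ _ => by positivity
    _ = (∑ a ∈ Icc 1 N, (a : ℝ) ^ (-(3 / 2 : ℝ))) * ∑ c ∈ Icc 1 N, (c : ℝ)⁻¹ := by
        simp only [natCast_cube_mul_sq_rpow_neg_half, sum_mul_sum, sum_product]
    _ ≤ (∑' a : ℕ, (a : ℝ) ^ (-(3 / 2 : ℝ))) * (1 + Real.log N) :=
        mul_le_mul (h_summable.sum_le_tsum _ fun _ _ => by positivity) h_harmonic
          (sum_nonneg fun _ _ => by positivity) (tsum_nonneg fun _ => by positivity)

open scoped Classical in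
theorem sum_squarefreeUnitaryPart_rpow_neg_half_le_sum_powerful (N : ℕ) :
    ∑ n ∈ Icc 1 N, (squarefreeUnitaryPart n : ℝ) ^ (-(1 / 2 : ℝ))
      ≤ 2 * √N * ∑ m ∈ Icc 1 N with m.Powerful, (m : ℝ) ^ (-(1 / 2 : ℝ)) := by
  set e : ℕ → Σ _ : ℕ, ℕ := fun n => ⟨n / squarefreeUnitaryPart n, squarefreeUnitaryPart n⟩
  have h_mul (n : ℕ) : n / squarefreeUnitaryPart n * squarefreeUnitaryPart n = n :=
    Nat.div_mul_cancel (squarefreeUnitaryPart_dvd n)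
  have h_maps :
      Set.MapsTo e (Icc 1 N) ({m ∈ Icc 1 N | m.Powerful}.sigma fun m => Icc 1 (N / m)) := by
    intro n hn
    have hn := mem_Icc.mp hn
    have h_pos : 0 < n / squarefreeUnitaryPart n * squarefreeUnitaryPart n := by
      rw [h_mul]; exact hn.1
    obtain ⟨hm, hd⟩ := CanonicallyOrderedAdd.mul_pos.mp h_pos
    simp only [e, coe_sigma, Set.mem_sigma_iff, coe_filter, Set.mem_ofPred_eq, mem_coe, mem_Icc]
    refine ⟨⟨⟨hm, (Nat.div_le_self _ _).trans hn.2⟩, Nat.powerful_div_squarefreeUnitaryPart n⟩,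
      hd, (Nat.le_div_iff_mul_le hm).mpr (by rw [mul_comm, h_mul]; exact hn.2)⟩
  have h_inj : Set.InjOn e (Icc 1 N) := by
    intro x _ y _ hxy
    simp only [e, Sigma.mk.injEq, heq_eq_eq] at hxy
    rw [← h_mul x, ← h_mul y, hxy.1, hxy.2]
  calc ∑ n ∈ Icc 1 N, (squarefreeUnitaryPart n : ℝ) ^ (-(1 / 2 : ℝ))
      ≤ ∑ x ∈ {m ∈ Icc 1 N | m.Powerful}.sigma (fun m => Icc 1 (N / m)),
          (x.2 : ℝ) ^ (-(1 / 2 : ℝ)) :=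
        sum_comp_le_sum_of_injOn (g := fun x => (x.2 : ℝ) ^ (-(1 / 2 : ℝ))) h_inj h_maps
          fun _ _ => by positivity
    _ = ∑ m ∈ Icc 1 N with m.Powerful, ∑ d ∈ Icc 1 (N / m), (d : ℝ) ^ (-(1 / 2 : ℝ)) :=
        sum_sigma _ _ _
    _ ≤ ∑ m ∈ Icc 1 N with m.Powerful, 2 * √N * (m : ℝ) ^ (-(1 / 2 : ℝ)) :=
        sum_le_sum fun m _ => sum_Icc_div_rpow_neg_half_le N m
    _ = 2 * √N * ∑ m ∈ Icc 1 N with m.Powerful, (m : ℝ) ^ (-(1 / 2 : ℝ)) :=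
        (mul_sum _ _ _).symm

/-- `∑_{n ≤ X} f(n)^{-1/2} ≪ X^{1/2} log X` with an absolute implied constant. -/
theorem sum_squarefreeUnitaryPart_rpow_neg_half :
    ∃ C : ℝ, 0 < C ∧ ∀ X : ℝ, 2 ≤ X →
      ∑ n ∈ Finset.Icc 1 ⌊X⌋₊, (squarefreeUnitaryPart n : ℝ) ^ (-(1/2 : ℝ))
        ≤ C * X ^ ((1:ℝ)/2) * Real.log X := by
  set S := ∑' a : ℕ, (a : ℝ) ^ (-(3 / 2 : ℝ))
  have hS : 0 < S := (Real.summable_nat_rpow.mpr (by norm_num)).tsum_pos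
    (fun _ => by positivity) 1 (by norm_num)
  refine ⟨6 * S, by positivity, fun X hX => ?_⟩
  set N := ⌊X⌋₊
  have hNX : (N : ℝ) ≤ X := Nat.floor_le (by linarith)
  have hN : (0 : ℝ) < N := by exact_mod_cast Nat.floor_pos.mpr (by linarith)
  have h_log : 1 + Real.log N ≤ 3 * Real.log X := by
    have := Real.log_le_log hN hNX
    have := Real.log_le_log (by norm_num) hX
    have := Real.log_two_gt_d9
    linarith
  calc ∑ n ∈ Icc 1 N, (squarefreeUnitaryPart n : ℝ) ^ (-(1 / 2 : ℝ))
      ≤ 2 * √N * (S * (1 + Real.log N)) := by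
        grw [sum_squarefreeUnitaryPart_rpow_neg_half_le_sum_powerful,
          sum_powerful_rpow_neg_half_le]
    _ ≤ 2 * √X * (S * (3 * Real.log X)) := by gcongr
    _ = 6 * S * X ^ ((1 : ℝ) / 2) * Real.log X := by rw [Real.sqrt_eq_rpow]; ring
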